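/- If m is a resource term in normal form and m approximates a dBang term M (m ⊲ M), then there exists a Böhm approximant A with A ⊑ M such that m belongs to the Taylor expansion of A. -/
import Mathlib


namespace DBangPaper

/-- dBang terms (with ⊥ used for Böhm approximants). -/
inductive DTerm : Type
  | var : ℕ → DTerm
  | lam : ℕ → DTerm → DTerm
  | app : DTerm → DTerm → DTerm
  | bang : DTerm → DTerm
  | der : DTerm → DTerm
  | sub : DTerm → ℕ → DTerm → DTerm   -- `sub M x N` is M[N/x]
  | bot : DTerm
  deriving DecidableEq

/-- meta-level substitution M{N/x} (written `dsubst N x M`). -/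
def dsubst (N : DTerm) (x : ℕ) : DTerm → DTerm
  | .var y => if y = x then N else .var y
  | .lam y M => if y = x then .lam y M else .lam y (dsubst N x M)
  | .app M P => .app (dsubst N x M) (dsubst N x P)
  | .bang M => .bang (dsubst N x M)
  | .der M => .der (dsubst N x M)
  | .sub M y P =>
      if y = x then .sub M y (dsubst N x P)
      else .sub (dsubst N x M) y (dsubst N x P)
  | .bot => .bot

/-- list contexts L = □[N₁/x₁]…[Nₖ/xₖ], applied to a term. -/
def lfill (l : List (ℕ × DTerm)) (M : DTerm) : DTerm :=
  l.foldl (fun A p => .sub A p.1 p.2) M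

/-- root (at-a-distance) reduction rules of dBang. -/
inductive Root : DTerm → DTerm → Prop
  | der (l N) : Root (.der (lfill l (.bang N))) (lfill l N)
  | beta (l x M N) : Root (.app (lfill l (.lam x M)) N) (lfill l (.sub M x N))
  | subst (M x l N) : Root (.sub M x (lfill l (.bang N))) (lfill l (dsubst N x M))

/-- full one-step dBang reduction (closure under all contexts). -/
inductive Step : DTerm → DTerm → Prop
  | root {M N} : Root M N → Step M N
  | lam (x) {M N} : Step M N → Step (.lam x M) (.lam x N)
  | appL {M M'} (N) : Step M M' → Step (.app M N) (.app M' N)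
  | appR (M) {N N'} : Step N N' → Step (.app M N) (.app M N')
  | bang {M N} : Step M N → Step (.bang M) (.bang N)
  | der {M N} : Step M N → Step (.der M) (.der N)
  | subL {M M'} (x N) : Step M M' → Step (.sub M x N) (.sub M' x N)
  | subR (M x) {N N'} : Step N N' → Step (.sub M x N) (.sub M x N')

/-- surface one-step dBang reduction (not under a bang). -/
inductive SStep : DTerm → DTerm → Prop
  | root {M N} : Root M N → SStep M N
  | lam (x) {M N} : SStep M N → SStep (.lam x M) (.lam x N)
  | appL {M M'} (N) : SStep M M' → SStep (.app M N) (.app M' N)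
  | appR (M) {N N'} : SStep N N' → SStep (.app M N) (.app M N')
  | der {M N} : SStep M N → SStep (.der M) (.der N)
  | subL {M M'} (x N) : SStep M M' → SStep (.sub M x N) (.sub M' x N)
  | subR (M x) {N N'} : SStep N N' → SStep (.sub M x N) (.sub M x N')

def Steps : DTerm → DTerm → Prop := Relation.ReflTransGen Step
def SSteps : DTerm → DTerm → Prop := Relation.ReflTransGen SStep

/-- resource (δBang) terms: bags of terms replace bangs. -/
inductive RTerm : Type
  | var : ℕ → RTerm
  | lam : ℕ → RTerm → RTerm
  | app : RTerm → RTerm → RTerm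
  | bag : List RTerm → RTerm
  | der : RTerm → RTerm
  | sub : RTerm → ℕ → RTerm → RTerm

mutual
  /-- linear (resource) substitution: `LSub m x ps m'` means m' is one result of
      substituting the resources `ps` linearly for the occurrences of x in m. -/
  inductive LSub : RTerm → ℕ → List RTerm → RTerm → Prop
    | varHit (x p) : LSub (.var x) x [p] p
    | varMiss {y x : ℕ} (h : y ≠ x) : LSub (.var y) x [] (.var y)
    | lam {m x ps m'} (y : ℕ) (hy : y ≠ x) :
        LSub m x ps m' → LSub (.lam y m) x ps (.lam y m')
    | app {m n x ps qs rs m' n'} : LSub m x ps m' → LSub n x qs n' →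
        (ps ++ qs).Perm rs → LSub (.app m n) x rs (.app m' n')
    | der {m x ps m'} : LSub m x ps m' → LSub (.der m) x ps (.der m')
    | sub {m n x ps qs rs m' n'} (y : ℕ) (hy : y ≠ x) : LSub m x ps m' →
        LSub n x qs n' → (ps ++ qs).Perm rs → LSub (.sub m y n) x rs (.sub m' y n')
    | bag {ms x ps ms'} : LSubs ms x ps ms' → LSub (.bag ms) x ps (.bag ms')
  inductive LSubs : List RTerm → ℕ → List RTerm → List RTerm → Prop
    | nil (x) : LSubs [] x [] []
    | cons {m ms x ps qs rs m' ms'} : LSub m x ps m' → LSubs ms x qs ms' →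
        (ps ++ qs).Perm rs → LSubs (m :: ms) x rs (m' :: ms')
end

/-- resource list contexts. -/
def rfill (l : List (ℕ × RTerm)) (m : RTerm) : RTerm :=
  l.foldl (fun a p => .sub a p.1 p.2) m

/-- root resource reduction (producing a single term of the resulting sum). -/
inductive RRoot : RTerm → RTerm → Prop
  | der (l n) : RRoot (.der (rfill l (.bag [n]))) (rfill l n)
  | beta (l x m p) : RRoot (.app (rfill l (.lam x m)) p) (rfill l (.sub m x p))
  | subst {m : RTerm} {x ps m'} (l) : LSub m x ps m' →
      RRoot (.sub m x (rfill l (.bag ps))) (rfill l m')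

/-- root resource reduction to the empty sum ∅ (arity mismatch). -/
inductive RRootE : RTerm → Prop
  | der (l ms) (h : ms.length ≠ 1) : RRootE (.der (rfill l (.bag ms)))
  | subst (m x ps l) (h : ¬ ∃ m', LSub m x ps m') :
      RRootE (.sub m x (rfill l (.bag ps)))

/-- full one-step resource reduction (to a term of the resulting sum). -/
inductive RStep : RTerm → RTerm → Prop
  | root {m n} : RRoot m n → RStep m n
  | lam (x) {m n} : RStep m n → RStep (.lam x m) (.lam x n)
  | appL {m m'} (n) : RStep m m' → RStep (.app m n) (.app m' n)
  | appR (m) {n n'} : RStep n n' → RStep (.app m n) (.app m n')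
  | der {m n} : RStep m n → RStep (.der m) (.der n)
  | subL {m m'} (x n) : RStep m m' → RStep (.sub m x n) (.sub m' x n)
  | subR (m x) {n n'} : RStep n n' → RStep (.sub m x n) (.sub m x n')
  | bag {m m'} (pre post) : RStep m m' →
      RStep (.bag (pre ++ m :: post)) (.bag (pre ++ m' :: post))

/-- full one-step resource reduction to the empty sum. -/
inductive REmpty : RTerm → Prop
  | root {m} : RRootE m → REmpty m
  | lam (x) {m} : REmpty m → REmpty (.lam x m)
  | appL {m} (n) : REmpty m → REmpty (.app m n)
  | appR (m) {n} : REmpty n → REmpty (.app m n)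
  | der {m} : REmpty m → REmpty (.der m)
  | subL {m} (x n) : REmpty m → REmpty (.sub m x n)
  | subR (m x) {n} : REmpty n → REmpty (.sub m x n)
  | bag {m} (pre post) : REmpty m → REmpty (.bag (pre ++ m :: post))

/-- surface one-step resource reduction. -/
inductive RSStep : RTerm → RTerm → Prop
  | root {m n} : RRoot m n → RSStep m n
  | lam (x) {m n} : RSStep m n → RSStep (.lam x m) (.lam x n)
  | appL {m m'} (n) : RSStep m m' → RSStep (.app m n) (.app m' n)
  | appR (m) {n n'} : RSStep n n' → RSStep (.app m n) (.app m n')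
  | der {m n} : RSStep m n → RSStep (.der m) (.der n)
  | subL {m m'} (x n) : RSStep m m' → RSStep (.sub m x n) (.sub m' x n)
  | subR (m x) {n n'} : RSStep n n' → RSStep (.sub m x n) (.sub m x n')

/-- surface one-step resource reduction to the empty sum. -/
inductive RSEmpty : RTerm → Prop
  | root {m} : RRootE m → RSEmpty m
  | lam (x) {m} : RSEmpty m → RSEmpty (.lam x m)
  | appL {m} (n) : RSEmpty m → RSEmpty (.app m n)
  | appR (m) {n} : RSEmpty n → RSEmpty (.app m n)
  | der {m} : RSEmpty m → RSEmpty (.der m)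
  | subL {m} (x n) : RSEmpty m → RSEmpty (.sub m x n)
  | subR (m x) {n} : RSEmpty n → RSEmpty (.sub m x n)

def RSteps : RTerm → RTerm → Prop := Relation.ReflTransGen RStep

/-- the approximation relation m ⊲ M between resource terms and dBang terms. -/
inductive Approx : RTerm → DTerm → Prop
  | var (x) : Approx (.var x) (.var x)
  | lam {m M} (x) : Approx m M → Approx (.lam x m) (.lam x M)
  | app {m M n N} : Approx m M → Approx n N → Approx (.app m n) (.app M N)
  | bang {ms M} : (∀ m ∈ ms, Approx m M) → Approx (.bag ms) (.bang M)
  | der {m M} : Approx m M → Approx (.der m) (.der M)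
  | sub {m M n N} (x) : Approx m M → Approx n N → Approx (.sub m x n) (.sub M x N)

/-- Taylor expansion of a dBang term. -/
def Taylor (M : DTerm) : Set RTerm := {m | Approx m M}

/-- a resource term is normal when it has no redex (no reduction, not even to ∅). -/
def RNormal (m : RTerm) : Prop := (¬ ∃ n, RStep m n) ∧ ¬ REmpty m

/-- normal-form Taylor expansion. -/
def NFTaylor (M : DTerm) : Set RTerm :=
  {n | RNormal n ∧ ∃ m, Approx m M ∧ RSteps m n}

/-- M is of the shape L⟨!N⟩. -/
def IsBangCtx (M : DTerm) : Prop := ∃ l N, M = lfill l (.bang N)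

/-- M is of the shape L⟨λx.N⟩. -/
def IsLamCtx (M : DTerm) : Prop := ∃ l x N, M = lfill l (.lam x N)

/-- dBang Böhm approximants. -/
inductive IsApprox : DTerm → Prop
  | bot : IsApprox .bot
  | var (x) : IsApprox (.var x)
  | lam (x) {A} : IsApprox A → IsApprox (.lam x A)
  | bang {A} : IsApprox A → IsApprox (.bang A)
  | der {A} : IsApprox A → ¬ IsBangCtx A → IsApprox (.der A)
  | app {A B} : IsApprox A → IsApprox B → ¬ IsLamCtx A → IsApprox (.app A B)
  | sub {A B} (x) : IsApprox A → IsApprox B → ¬ IsBangCtx B → IsApprox (.sub A x B)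

/-- the approximation order: A ⊑ M when A is obtained from M by replacing
    subterms by ⊥. -/
inductive SqSub : DTerm → DTerm → Prop
  | bot (M) : SqSub .bot M
  | var (x) : SqSub (.var x) (.var x)
  | lam (x) {A M} : SqSub A M → SqSub (.lam x A) (.lam x M)
  | app {A M B N} : SqSub A M → SqSub B N → SqSub (.app A B) (.app M N)
  | bang {A M} : SqSub A M → SqSub (.bang A) (.bang M)
  | der {A M} : SqSub A M → SqSub (.der A) (.der M)
  | sub {A M B N} (x) : SqSub A M → SqSub B N → SqSub (.sub A x B) (.sub M x N)

/-- the set of Böhm approximants of M. -/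
def BohmSet (M : DTerm) : Set DTerm :=
  {A | IsApprox A ∧ ∃ N, Steps M N ∧ SqSub A N}

/-- Taylor expansion of the Böhm tree of M. -/
def TaylorBT (M : DTerm) : Set RTerm :=
  {m | ∃ A ∈ BohmSet M, Approx m A}

/-- testing contexts T ::= □ | T N | (λx.T) N. -/
inductive TCtx : Type
  | hole : TCtx
  | app : TCtx → DTerm → TCtx
  | lapp : ℕ → TCtx → DTerm → TCtx

def tfill : TCtx → DTerm → DTerm
  | .hole, M => M
  | .app T N, M => .app (tfill T M) N
  | .lapp x T N, M => .app (.lam x (tfill T M)) N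

/-- meaningfulness in dBang. -/
def Meaningful (M : DTerm) : Prop := ∃ T P, SSteps (tfill T M) (.bang P)

/-- the call-by-name fragment dBang_N. -/
inductive InN : DTerm → Prop
  | var (x) : InN (.var x)
  | lam (x) {M} : InN M → InN (.lam x M)
  | app {M N} : InN M → InN N → InN (.app M (.bang N))
  | sub {M N} (x) : InN M → InN N → InN (.sub M x (.bang N))

/-! ### dCBN / dCBV -/

/-- terms of dCBN and dCBV (with ⊥ for approximants). -/
inductive NTerm : Type
  | var : ℕ → NTerm
  | lam : ℕ → NTerm → NTerm
  | app : NTerm → NTerm → NTerm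
  | sub : NTerm → ℕ → NTerm → NTerm
  | bot : NTerm
  deriving DecidableEq

def nsubst (N : NTerm) (x : ℕ) : NTerm → NTerm
  | .var y => if y = x then N else .var y
  | .lam y M => if y = x then .lam y M else .lam y (nsubst N x M)
  | .app M P => .app (nsubst N x M) (nsubst N x P)
  | .sub M y P =>
      if y = x then .sub M y (nsubst N x P)
      else .sub (nsubst N x M) y (nsubst N x P)
  | .bot => .bot

def nlfill (l : List (ℕ × NTerm)) (M : NTerm) : NTerm :=
  l.foldl (fun A p => .sub A p.1 p.2) M

def IsValueN : NTerm → Prop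
  | .var _ => True
  | .lam _ _ => True
  | _ => False

/-- dCBN reduction. -/
inductive RootN : NTerm → NTerm → Prop
  | beta (l x M N) : RootN (.app (nlfill l (.lam x M)) N) (nlfill l (.sub M x N))
  | subst (M x N) : RootN (.sub M x N) (nsubst N x M)

inductive StepN : NTerm → NTerm → Prop
  | root {M N} : RootN M N → StepN M N
  | lam (x) {M N} : StepN M N → StepN (.lam x M) (.lam x N)
  | appL {M M'} (N) : StepN M M' → StepN (.app M N) (.app M' N)
  | appR (M) {N N'} : StepN N N' → StepN (.app M N) (.app M N')
  | subL {M M'} (x N) : StepN M M' → StepN (.sub M x N) (.sub M' x N)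
  | subR (M x) {N N'} : StepN N N' → StepN (.sub M x N) (.sub M x N')

/-- dCBV reduction. -/
inductive RootV : NTerm → NTerm → Prop
  | beta (l x M N) : RootV (.app (nlfill l (.lam x M)) N) (nlfill l (.sub M x N))
  | subst (M x l) {V} (hV : IsValueN V) :
      RootV (.sub M x (nlfill l V)) (nlfill l (nsubst V x M))

inductive StepV : NTerm → NTerm → Prop
  | root {M N} : RootV M N → StepV M N
  | lam (x) {M N} : StepV M N → StepV (.lam x M) (.lam x N)
  | appL {M M'} (N) : StepV M M' → StepV (.app M N) (.app M' N)
  | appR (M) {N N'} : StepV N N' → StepV (.app M N) (.app M N')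
  | subL {M M'} (x N) : StepV M M' → StepV (.sub M x N) (.sub M' x N)
  | subR (M x) {N N'} : StepV N N' → StepV (.sub M x N) (.sub M x N')

def StepsN : NTerm → NTerm → Prop := Relation.ReflTransGen StepN
def StepsV : NTerm → NTerm → Prop := Relation.ReflTransGen StepV

/-- the call-by-name translation into dBang. -/
def tradN : NTerm → DTerm
  | .var x => .var x
  | .lam x M => .lam x (tradN M)
  | .app M N => .app (tradN M) (.bang (tradN N))
  | .sub M x N => .sub (tradN M) x (.bang (tradN N))
  | .bot => .bot

/-- decompose M = L⟨!P⟩, returning L⟨P⟩. -/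
def debang : DTerm → Option DTerm
  | .bang P => some P
  | .sub M x N => (debang M).map fun M' => .sub M' x N
  | _ => none

/-- the call-by-value translation into dBang. -/
def tradV : NTerm → DTerm
  | .var x => .bang (.var x)
  | .lam x M => .bang (.lam x (tradV M))
  | .app M N =>
      match debang (tradV M) with
      | some Q => .app Q (tradV N)
      | none => .app (.der (tradV M)) (tradV N)
  | .sub M x N => .sub (tradV M) x (tradV N)
  | .bot => .bot

/-- the CbN approximation relation ⊲ₙ. -/
inductive ApproxN : RTerm → NTerm → Prop
  | var (x) : ApproxN (.var x) (.var x)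
  | lam {m M} (x) : ApproxN m M → ApproxN (.lam x m) (.lam x M)
  | app {m M ns N} : ApproxN m M → (∀ n ∈ ns, ApproxN n N) →
      ApproxN (.app m (.bag ns)) (.app M N)
  | sub {m M ns N} (x) : ApproxN m M → (∀ n ∈ ns, ApproxN n N) →
      ApproxN (.sub m x (.bag ns)) (.sub M x N)

def TaylorN (M : NTerm) : Set RTerm := {m | ApproxN m M}

/-- the CbV approximation relation ⊲ᵥ. -/
inductive ApproxV : RTerm → NTerm → Prop
  | var (x k) : ApproxV (.bag (List.replicate k (.var x))) (.var x)
  | lam {ms : List RTerm} {M} (x) : (∀ m ∈ ms, ApproxV m M) →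
      ApproxV (.bag (ms.map (RTerm.lam x))) (.lam x M)
  | appN {m M n N} : ¬ IsValueN M → ApproxV m M → ApproxV n N →
      ApproxV (.app (.der m) n) (.app M N)
  | appV {m V n N} : IsValueN V → ApproxV (.bag [m]) V → ApproxV n N →
      ApproxV (.app m n) (.app V N)
  | sub {m M n N} (x) : ApproxV m M → ApproxV n N →
      ApproxV (.sub m x n) (.sub M x N)

def TaylorV (M : NTerm) : Set RTerm := {m | ApproxV m M}

def NFTaylorN (M : NTerm) : Set RTerm :=
  {n | RNormal n ∧ ∃ m, ApproxN m M ∧ RSteps m n}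

def NFTaylorV (M : NTerm) : Set RTerm :=
  {n | RNormal n ∧ ∃ m, ApproxV m M ∧ RSteps m n}

/-- order A ⊑ M on dCBN/dCBV terms. -/
inductive SqSubN : NTerm → NTerm → Prop
  | bot (M) : SqSubN .bot M
  | var (x) : SqSubN (.var x) (.var x)
  | lam (x) {A M} : SqSubN A M → SqSubN (.lam x A) (.lam x M)
  | app {A M B N} : SqSubN A M → SqSubN B N → SqSubN (.app A B) (.app M N)
  | sub {A M B N} (x) : SqSubN A M → SqSubN B N → SqSubN (.sub A x B) (.sub M x N)

mutual
  /-- CbN Böhm approximants Aₙ. -/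
  inductive IsAN : NTerm → Prop
    | bot : IsAN .bot
    | ofNlam {A} : IsNlam A → IsAN A
    | lam (x) {A} : IsAN A → IsAN (.lam x A)
  /-- head shapes N_λ. -/
  inductive IsNlam : NTerm → Prop
    | var (x) : IsNlam (.var x)
    | app {A B} : IsNlam A → IsAN B → IsNlam (.app A B)
end

def BTnSet (M : NTerm) : Set NTerm :=
  {A | IsAN A ∧ ∃ N, StepsN M N ∧ SqSubN A N}

mutual
  /-- CbV Böhm approximants Aᵥ. -/
  inductive IsAV : NTerm → Prop
    | bot : IsAV .bot
    | ofAlam {A} : IsAlam A → IsAV A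
    | lam (x) {A} : IsAV A → IsAV (.lam x A)
    | sub (x) {A B} : IsAV A → IsAxlam B → IsAV (.sub A x B)
  inductive IsAlam : NTerm → Prop
    | var (x) : IsAlam (.var x)
    | app {A B} : IsAlam A → IsAV B → IsAlam (.app A B)
    | sub (x) {A B} : IsAlam A → IsAxlam B → IsAlam (.sub A x B)
  inductive IsAxlam : NTerm → Prop
    | app {A B} : IsAlam A → IsAV B → IsAxlam (.app A B)
    | sub (x) {A B} : IsAxlam A → IsAxlam B → IsAxlam (.sub A x B)
end

def BTvSet (M : NTerm) : Set NTerm :=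
  {A | IsAV A ∧ ∃ N, StepsV M N ∧ SqSubN A N}

def TaylorBTn (M : NTerm) : Set RTerm := {m | ∃ A ∈ BTnSet M, ApproxN m A}
def TaylorBTv (M : NTerm) : Set RTerm := {m | ∃ A ∈ BTvSet M, ApproxV m A}

/-! ### auxiliary material for `nf_in_approx` -/

lemma lfill_append (l : List (ℕ × DTerm)) (x : ℕ) (N M : DTerm) :
    lfill (l ++ [(x, N)]) M = .sub (lfill l M) x N := by
  simp [lfill, List.foldl_append]

lemma rfill_append (l : List (ℕ × RTerm)) (x : ℕ) (n m : RTerm) :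
    rfill (l ++ [(x, n)]) m = .sub (rfill l m) x n := by
  simp [rfill, List.foldl_append]

/-- the head of a term through a substitution spine is a bang. -/
def headIsBang : DTerm → Bool
  | .bang _ => true
  | .sub A _ _ => headIsBang A
  | _ => false

/-- the head of a term through a substitution spine is a lambda. -/
def headIsLam : DTerm → Bool
  | .lam _ _ => true
  | .sub A _ _ => headIsLam A
  | _ => false

lemma headBang_lfill (l : List (ℕ × DTerm)) (M : DTerm) :
    headIsBang (lfill l M) = headIsBang M := by
  induction l generalizing M with
  | nil => rfl
  | cons p l ih => simp [lfill] at ih ⊢; rw [ih]; rfl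

lemma headLam_lfill (l : List (ℕ × DTerm)) (M : DTerm) :
    headIsLam (lfill l M) = headIsLam M := by
  induction l generalizing M with
  | nil => rfl
  | cons p l ih => simp [lfill] at ih ⊢; rw [ih]; rfl

lemma bangCtx_of_head : ∀ {M : DTerm}, headIsBang M = true → IsBangCtx M := by
  intro M
  induction M with
  | bang N _ => exact fun _ => ⟨[], N, rfl⟩
  | sub A x B ihA _ =>
      intro h
      obtain ⟨l, N, rfl⟩ := ihA h
      exact ⟨l ++ [(x, B)], N, (lfill_append l x B _).symm⟩
  | _ => intro h <;> simp [headIsBang] at h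
  repeat (intro h; simp [headIsBang] at h)

lemma lamCtx_of_head : ∀ {M : DTerm}, headIsLam M = true → IsLamCtx M := by
  intro M
  induction M with
  | lam x N _ => exact fun _ => ⟨[], x, N, rfl⟩
  | sub A x B ihA _ =>
      intro h
      obtain ⟨l, y, N, rfl⟩ := ihA h
      exact ⟨l ++ [(x, B)], y, N, (lfill_append l x B _).symm⟩
  | _ => intro h <;> simp [headIsLam] at h
  repeat (intro h; simp [headIsLam] at h)

lemma approx_bag_of_head {m M} (h : Approx m M) (hb : headIsBang M = true) :
    ∃ l' ms, m = rfill l' (RTerm.bag ms) := by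
  induction h with
  | bang _ => exact ⟨[], _, rfl⟩
  | sub x h1 h2 ih1 ih2 =>
      simp only [headIsBang] at hb
      obtain ⟨l', ms, rfl⟩ := ih1 hb
      exact ⟨l' ++ [(x, _)], ms, (rfill_append _ _ _ _).symm⟩
  | _ => simp [headIsBang] at hb

lemma approx_lam_of_head {m M} (h : Approx m M) (hb : headIsLam M = true) :
    ∃ l' y m0, m = rfill l' (RTerm.lam y m0) := by
  induction h with
  | lam x h ih => exact ⟨[], x, _, rfl⟩
  | sub x h1 h2 ih1 ih2 =>
      simp only [headIsLam] at hb
      obtain ⟨l', y, m0, rfl⟩ := ih1 hb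
      exact ⟨l' ++ [(x, _)], y, m0, (rfill_append _ _ _ _).symm⟩
  | _ => simp [headIsLam] at hb

/-- join of two compatible approximants. -/
def djoin : DTerm → DTerm → DTerm
  | .bot, B => B
  | .lam x A, .lam _ B => .lam x (djoin A B)
  | .app A B, .app A' B' => .app (djoin A A') (djoin B B')
  | .bang A, .bang B => .bang (djoin A B)
  | .der A, .der B => .der (djoin A B)
  | .sub A x B, .sub A' _ B' => .sub (djoin A A') x (djoin B B')
  | A, _ => A

lemma head_djoin_bang (A : DTerm) : ∀ B, headIsBang (djoin A B) = true →
    headIsBang A = true ∨ headIsBang B = true := by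
  induction A with
  | sub A x C ihA _ =>
      intro B h
      cases B <;> simp only [djoin, headIsBang] at h ⊢ <;>
        first
          | exact Or.inl h
          | exact (ihA _ h).imp id id
  | bot => exact fun B h => Or.inr h
  | _ => intro B h <;> cases B <;> simp [djoin, headIsBang] at h ⊢ <;> exact Or.inl h

lemma head_djoin_lam (A : DTerm) : ∀ B, headIsLam (djoin A B) = true →
    headIsLam A = true ∨ headIsLam B = true := by
  induction A with
  | sub A x C ihA _ =>
      intro B h
      cases B <;> simp only [djoin, headIsLam] at h ⊢ <;>
        first
          | exact Or.inl h
          | exact (ihA _ h).imp id id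
  | bot => exact fun B h => Or.inr h
  | _ => intro B h <;> cases B <;> simp [djoin, headIsLam] at h ⊢ <;> exact Or.inl h

lemma not_bangCtx_djoin {A B : DTerm} (hA : ¬ IsBangCtx A) (hB : ¬ IsBangCtx B) :
    ¬ IsBangCtx (djoin A B) := by
  rintro ⟨l, N, hEq⟩
  have h : headIsBang (djoin A B) = true := by
    rw [hEq, headBang_lfill]; rfl
  rcases head_djoin_bang A B h with h | h
  · exact hA (bangCtx_of_head h)
  · exact hB (bangCtx_of_head h)

lemma not_lamCtx_djoin {A B : DTerm} (hA : ¬ IsLamCtx A) (hB : ¬ IsLamCtx B) :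
    ¬ IsLamCtx (djoin A B) := by
  rintro ⟨l, x, N, hEq⟩
  have h : headIsLam (djoin A B) = true := by
    rw [hEq, headLam_lfill]; rfl
  rcases head_djoin_lam A B h with h | h
  · exact hA (lamCtx_of_head h)
  · exact hB (lamCtx_of_head h)

lemma sqsub_refl : ∀ M : DTerm, SqSub M M := by
  intro M
  induction M with
  | var x => exact .var x
  | lam x M ih => exact .lam x ih
  | app M N ih1 ih2 => exact .app ih1 ih2
  | bang M ih => exact .bang ih
  | der M ih => exact .der ih
  | sub M x N ih1 ih2 => exact .sub x ih1 ih2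
  | bot => exact .bot _


lemma djoin_bot : ∀ A : DTerm, djoin A .bot = A := by
  intro A; cases A <;> simp [djoin]

lemma sqsub_djoin {A M : DTerm} (hA : SqSub A M) :
    ∀ B, SqSub B M →
      SqSub A (djoin A B) ∧ SqSub B (djoin A B) ∧ SqSub (djoin A B) M := by
  induction hA with
  | bot M =>
      exact fun B hB => ⟨.bot _, by simpa [djoin] using sqsub_refl B, by simpa [djoin] using hB⟩
  | var x =>
      intro B hB
      cases hB with
      | bot => rw [djoin_bot]; exact ⟨.var x, .bot _, .var x⟩
      | var => exact ⟨.var x, .var x, .var x⟩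
  | lam x hA ih =>
      intro B hB
      cases hB with
      | bot => rw [djoin_bot]; exact ⟨sqsub_refl _, .bot _, .lam x hA⟩
      | lam _ hB =>
          obtain ⟨a1, a2, a3⟩ := ih _ hB
          exact ⟨.lam x a1, .lam x a2, .lam x a3⟩
  | app hA1 hA2 ih1 ih2 =>
      intro B hB
      cases hB with
      | bot => rw [djoin_bot]; exact ⟨sqsub_refl _, .bot _, .app hA1 hA2⟩
      | app hB1 hB2 =>
          obtain ⟨a1, a2, a3⟩ := ih1 _ hB1
          obtain ⟨b1, b2, b3⟩ := ih2 _ hB2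
          exact ⟨.app a1 b1, .app a2 b2, .app a3 b3⟩
  | bang hA ih =>
      intro B hB
      cases hB with
      | bot => rw [djoin_bot]; exact ⟨sqsub_refl _, .bot _, .bang hA⟩
      | bang hB =>
          obtain ⟨a1, a2, a3⟩ := ih _ hB
          exact ⟨.bang a1, .bang a2, .bang a3⟩
  | der hA ih =>
      intro B hB
      cases hB with
      | bot => rw [djoin_bot]; exact ⟨sqsub_refl _, .bot _, .der hA⟩
      | der hB =>
          obtain ⟨a1, a2, a3⟩ := ih _ hB
          exact ⟨.der a1, .der a2, .der a3⟩
  | sub x hA1 hA2 ih1 ih2 =>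
      intro B hB
      cases hB with
      | bot => rw [djoin_bot]; exact ⟨sqsub_refl _, .bot _, .sub x hA1 hA2⟩
      | sub _ hB1 hB2 =>
          obtain ⟨a1, a2, a3⟩ := ih1 _ hB1
          obtain ⟨b1, b2, b3⟩ := ih2 _ hB2
          exact ⟨.sub x a1 b1, .sub x a2 b2, .sub x a3 b3⟩

lemma isApprox_djoin {A M : DTerm} (hA : SqSub A M) :
    ∀ B, SqSub B M → IsApprox A → IsApprox B → IsApprox (djoin A B) := by
  induction hA with
  | bot M => intro B _ _ h2; simpa [djoin] using h2
  | var x =>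
      intro B hB _ _
      cases hB with
      | bot => rw [djoin_bot]; exact .var x
      | var => exact .var x
  | lam x hA ih =>
      intro B hB h1 h2
      cases h1 with
      | lam _ h1 =>
        cases hB with
        | bot => rw [djoin_bot]; exact .lam x h1
        | lam _ hB =>
            cases h2 with
            | lam _ h2 => exact .lam x (ih _ hB h1 h2)
  | app hA1 hA2 ih1 ih2 =>
      intro B hB h1 h2
      cases h1 with
      | app h1a h1b hnl =>
        cases hB with
        | bot => rw [djoin_bot]; exact .app h1a h1b hnl
        | app hB1 hB2 =>
            cases h2 with
            | app h2a h2b hnl2 =>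
                exact .app (ih1 _ hB1 h1a h2a) (ih2 _ hB2 h1b h2b)
                  (not_lamCtx_djoin hnl hnl2)
  | bang hA ih =>
      intro B hB h1 h2
      cases h1 with
      | bang h1 =>
        cases hB with
        | bot => rw [djoin_bot]; exact .bang h1
        | bang hB =>
            cases h2 with
            | bang h2 => exact .bang (ih _ hB h1 h2)
  | der hA ih =>
      intro B hB h1 h2
      cases h1 with
      | der h1 hnb =>
        cases hB with
        | bot => rw [djoin_bot]; exact .der h1 hnb
        | der hB =>
            cases h2 with
            | der h2 hnb2 => exact .der (ih _ hB h1 h2) (not_bangCtx_djoin hnb hnb2)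
  | sub x hA1 hA2 ih1 ih2 =>
      intro B hB h1 h2
      cases h1 with
      | sub _ h1a h1b hnb =>
        cases hB with
        | bot => rw [djoin_bot]; exact .sub x h1a h1b hnb
        | sub _ hB1 hB2 =>
            cases h2 with
            | sub _ h2a h2b hnb2 =>
                exact .sub x (ih1 _ hB1 h1a h2a) (ih2 _ hB2 h1b h2b)
                  (not_bangCtx_djoin hnb hnb2)

lemma approx_mono {m A} (h : Approx m A) : ∀ B, SqSub A B → Approx m B := by
  induction h with
  | var x => intro B hB; cases hB; exact .var x
  | lam x h ih => intro B hB; cases hB with | lam _ hB => exact .lam x (ih _ hB)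
  | app h1 h2 ih1 ih2 =>
      intro B hB; cases hB with | app hB1 hB2 => exact .app (ih1 _ hB1) (ih2 _ hB2)
  | bang h ih =>
      intro B hB
      cases hB with | bang hB => exact .bang fun m hm => ih m hm _ hB
  | der h ih => intro B hB; cases hB with | der hB => exact .der (ih _ hB)
  | sub x h1 h2 ih1 ih2 =>
      intro B hB; cases hB with | sub _ hB1 hB2 => exact .sub x (ih1 _ hB1) (ih2 _ hB2)

lemma bang_fold (M' : DTerm) : ∀ ms : List RTerm,
    (∀ m ∈ ms, ∃ A, IsApprox A ∧ SqSub A M' ∧ Approx m A) →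
    ∃ A, IsApprox A ∧ SqSub A M' ∧ ∀ m ∈ ms, Approx m A := by
  intro ms
  induction ms with
  | nil => exact fun _ => ⟨.bot, .bot, .bot M', by simp⟩
  | cons m ms ih =>
      intro h
      obtain ⟨A, hA1, hA2, hA3⟩ := h m (by simp)
      obtain ⟨B, hB1, hB2, hB3⟩ := ih fun n hn => h n (by simp [hn])
      obtain ⟨j1, j2, j3⟩ := sqsub_djoin hA2 B hB2
      refine ⟨djoin A B, isApprox_djoin hA2 B hB2 hA1 hB1, j3, ?_⟩
      intro n hn
      rcases List.mem_cons.mp hn with rfl | hn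
      · exact approx_mono hA3 _ j1
      · exact approx_mono (hB3 n hn) _ j2

lemma rnormal_lam {x m} (h : RNormal (.lam x m)) : RNormal m :=
  ⟨fun ⟨n, hs⟩ => h.1 ⟨_, .lam x hs⟩, fun he => h.2 (.lam x he)⟩
lemma rnormal_appL {m n} (h : RNormal (.app m n)) : RNormal m :=
  ⟨fun ⟨_, hs⟩ => h.1 ⟨_, .appL n hs⟩, fun he => h.2 (.appL n he)⟩
lemma rnormal_appR {m n} (h : RNormal (.app m n)) : RNormal n :=
  ⟨fun ⟨_, hs⟩ => h.1 ⟨_, .appR m hs⟩, fun he => h.2 (.appR m he)⟩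
lemma rnormal_der {m} (h : RNormal (.der m)) : RNormal m :=
  ⟨fun ⟨_, hs⟩ => h.1 ⟨_, .der hs⟩, fun he => h.2 (.der he)⟩
lemma rnormal_subL {m x n} (h : RNormal (.sub m x n)) : RNormal m :=
  ⟨fun ⟨_, hs⟩ => h.1 ⟨_, .subL x n hs⟩, fun he => h.2 (.subL x n he)⟩
lemma rnormal_subR {m x n} (h : RNormal (.sub m x n)) : RNormal n :=
  ⟨fun ⟨_, hs⟩ => h.1 ⟨_, .subR m x hs⟩, fun he => h.2 (.subR m x he)⟩
lemma rnormal_bag {ms} (h : RNormal (.bag ms)) {m} (hm : m ∈ ms) : RNormal m := by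
  obtain ⟨pre, post, rfl⟩ := List.append_of_mem hm
  exact ⟨fun ⟨_, hs⟩ => h.1 ⟨_, .bag pre post hs⟩, fun he => h.2 (.bag pre post he)⟩

theorem nf_in_approx (m : RTerm) (M : DTerm) (hnf : RNormal m) (h : Approx m M) :
    ∃ A, IsApprox A ∧ SqSub A M ∧ Approx m A := by
  revert hnf
  induction h with
  | var x => exact fun _ => ⟨.var x, .var x, .var x, .var x⟩
  | lam x h ih =>
      intro hnf
      obtain ⟨A, h1, h2, h3⟩ := ih (rnormal_lam hnf)
      exact ⟨.lam x A, .lam x h1, .lam x h2, .lam x h3⟩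
  | app hm hn ihm ihn =>
      intro hnf
      obtain ⟨A, hA1, hA2, hA3⟩ := ihm (rnormal_appL hnf)
      obtain ⟨B, hB1, hB2, hB3⟩ := ihn (rnormal_appR hnf)
      refine ⟨.app A B, .app hA1 hB1 ?_, .app hA2 hB2, .app hA3 hB3⟩
      rintro ⟨l, x, N, rfl⟩
      have hh : headIsLam (lfill l (.lam x N)) = true := by
        rw [headLam_lfill]; rfl
      obtain ⟨l', y, m0, rfl⟩ := approx_lam_of_head hA3 hh
      exact hnf.1 ⟨_, .root (RRoot.beta l' y m0 _)⟩
  | bang hms ih =>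
      intro hnf
      obtain ⟨A, h1, h2, h3⟩ := bang_fold _ _ fun m hm => ih m hm (rnormal_bag hnf hm)
      exact ⟨.bang A, .bang h1, .bang h2, .bang h3⟩
  | der h ih =>
      intro hnf
      obtain ⟨A, h1, h2, h3⟩ := ih (rnormal_der hnf)
      refine ⟨.der A, .der h1 ?_, .der h2, .der h3⟩
      rintro ⟨l, N, rfl⟩
      have hh : headIsBang (lfill l (.bang N)) = true := by
        rw [headBang_lfill]; rfl
      obtain ⟨l', ms, rfl⟩ := approx_bag_of_head h3 hh
      match ms with
      | [n] => exact hnf.1 ⟨_, .root (RRoot.der l' n)⟩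
      | [] => exact hnf.2 (.root (RRootE.der l' [] (by simp)))
      | (a :: b :: t) => exact hnf.2 (.root (RRootE.der l' _ (by simp)))
  | @sub m1 M1 n1 N1 x hm hn ihm ihn =>
      intro hnf
      obtain ⟨A, hA1, hA2, hA3⟩ := ihm (rnormal_subL hnf)
      obtain ⟨B, hB1, hB2, hB3⟩ := ihn (rnormal_subR hnf)
      refine ⟨.sub A x B, .sub x hA1 hB1 ?_, .sub x hA2 hB2, .sub x hA3 hB3⟩
      rintro ⟨l, N, rfl⟩
      have hh : headIsBang (lfill l (.bang N)) = true := by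
        rw [headBang_lfill]; rfl
      obtain ⟨l', ps, rfl⟩ := approx_bag_of_head hB3 hh
      by_cases hex : ∃ m', LSub m1 x ps m'
      · obtain ⟨m', hls⟩ := hex
        exact hnf.1 ⟨_, .root (RRoot.subst l' hls)⟩
      · exact hnf.2 (.root (RRootE.subst m1 x ps l' hex))

end DBangPaper
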